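/- arXiv:1307.7572 — 2 statements merged into one kernel-verified Lean document; each statement's English description precedes it below -/
import Mathlib

section
/- (i) The subalgebra U_even of U_q(𝔰𝔩₂) is generated as an 𝔽-algebra by ν_x, ν_y, ν_z, y⁻². (ii) The subalgebra U′_even is generated as an 𝔽-algebra by ν_x, ν_y, ν_z. -/
/-!
Right multiplication by `x`, `y`, `y⁻¹`, `z` maps the span `V_n` of the monomials `x^r y^s z^t`
with `r + s + t ≡ n (mod 2)` into `V_{n+1}`: straightening `z^t x`, `y^s x` and `z^t y` with
the defining relations only produces monomials whose degree changed by one. Since every `ν` is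
`q(1 - gh)` for two generators `g, h`, right multiplication by the `ν`'s (and by `y⁻²`) preserves
`V_0 ∋ 1`, so the generated algebra lies in `V_0`.

Conversely, an even monomial is a product of consecutive pairs of letters, and every product of
two letters lies in the algebra generated by the `ν`'s: `xy`, `yz`, `zx` are `1 - q⁻¹ν`, the
reversed products follow from the relations, and squares from
`ν_z ν_y - q² ν_y ν_z = (q² - 1)(x² - 1)` and its cyclic versions, which need `q² ≠ 1`. Pairs
involving `y⁻¹` reduce to these through `y⁻¹g = y⁻²(yg)` and `gy⁻¹ = (gy)y⁻²`.
-/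

namespace Paper


/-- Generators for the equitable presentation of `U_q(sl2)`: `x`, `y`, `y⁻¹`, `z`. -/
inductive EqGen : Type
  | x | y | y' | z

/-- The defining relations of the equitable presentation of `U_q(sl2)`. -/
inductive EqRel (F : Type*) [Field F] (q : F) :
    FreeAlgebra F EqGen → FreeAlgebra F EqGen → Prop
  | yy' : EqRel F q (FreeAlgebra.ι F EqGen.y * FreeAlgebra.ι F EqGen.y') 1
  | y'y : EqRel F q (FreeAlgebra.ι F EqGen.y' * FreeAlgebra.ι F EqGen.y) 1
  | xy : EqRel F q
      (q • (FreeAlgebra.ι F EqGen.x * FreeAlgebra.ι F EqGen.y)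
        - q⁻¹ • (FreeAlgebra.ι F EqGen.y * FreeAlgebra.ι F EqGen.x))
      ((q - q⁻¹) • (1 : FreeAlgebra F EqGen))
  | yz : EqRel F q
      (q • (FreeAlgebra.ι F EqGen.y * FreeAlgebra.ι F EqGen.z)
        - q⁻¹ • (FreeAlgebra.ι F EqGen.z * FreeAlgebra.ι F EqGen.y))
      ((q - q⁻¹) • (1 : FreeAlgebra F EqGen))
  | zx : EqRel F q
      (q • (FreeAlgebra.ι F EqGen.z * FreeAlgebra.ι F EqGen.x)
        - q⁻¹ • (FreeAlgebra.ι F EqGen.x * FreeAlgebra.ι F EqGen.z))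
      ((q - q⁻¹) • (1 : FreeAlgebra F EqGen))

/-- `U_q(sl2)` in its equitable presentation. -/
abbrev Usl2 (F : Type*) [Field F] (q : F) := RingQuot (EqRel F q)

noncomputable def ux (F : Type*) [Field F] (q : F) : Usl2 F q :=
  RingQuot.mkAlgHom F (EqRel F q) (FreeAlgebra.ι F EqGen.x)

noncomputable def uy (F : Type*) [Field F] (q : F) : Usl2 F q :=
  RingQuot.mkAlgHom F (EqRel F q) (FreeAlgebra.ι F EqGen.y)

noncomputable def uy' (F : Type*) [Field F] (q : F) : Usl2 F q :=
  RingQuot.mkAlgHom F (EqRel F q) (FreeAlgebra.ι F EqGen.y')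

noncomputable def uz (F : Type*) [Field F] (q : F) : Usl2 F q :=
  RingQuot.mkAlgHom F (EqRel F q) (FreeAlgebra.ι F EqGen.z)

/-- `X = a⁻²x + (1 − a⁻²)y⁻¹`. -/
noncomputable def uX (F : Type*) [Field F] (q a : F) : Usl2 F q :=
  (a ^ 2)⁻¹ • ux F q + (1 - (a ^ 2)⁻¹) • uy' F q

/-- `Z = a²z + (1 − a²)y⁻¹`. -/
noncomputable def uZ (F : Type*) [Field F] (q a : F) : Usl2 F q :=
  a ^ 2 • uz F q + (1 - a ^ 2) • uy' F q

/-- `A = a⁻¹x + az`. -/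
noncomputable def uA (F : Type*) [Field F] (q a : F) : Usl2 F q :=
  a⁻¹ • ux F q + a • uz F q

/-- `U_q^∨`, the subalgebra of `U_q(sl2)` generated by `x`, `y⁻¹`, `z`. -/
noncomputable def Uvee (F : Type*) [Field F] (q : F) : Subalgebra F (Usl2 F q) :=
  Algebra.adjoin F {ux F q, uy' F q, uz F q}


/-- `ν_x = q(1 − yz)`. -/
noncomputable def nux (F : Type*) [Field F] (q : F) : Usl2 F q :=
  q • (1 - uy F q * uz F q)

/-- `ν_y = q(1 − zx)`. -/
noncomputable def nuy (F : Type*) [Field F] (q : F) : Usl2 F q :=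
  q • (1 - uz F q * ux F q)

/-- `ν_z = q(1 − xy)`. -/
noncomputable def nuz (F : Type*) [Field F] (q : F) : Usl2 F q :=
  q • (1 - ux F q * uy F q)

/-- The power `y^s` for `s ∈ ℤ`, interpreted via `y` and `y⁻¹`. -/
noncomputable def uypow (F : Type*) [Field F] (q : F) (s : ℤ) : Usl2 F q :=
  if 0 ≤ s then uy F q ^ s.toNat else uy' F q ^ (-s).toNat

/-- `U_even`, the span of the basis monomials `x^r y^s z^t` (`r, t ∈ ℕ`, `s ∈ ℤ`)
with `r + s + t` even. -/
noncomputable def Ueven (F : Type*) [Field F] (q : F) : Submodule F (Usl2 F q) :=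
  Submodule.span F
    {m | ∃ (r t : ℕ) (s : ℤ), Even ((r : ℤ) + s + t) ∧
      m = ux F q ^ r * uypow F q s * uz F q ^ t}

/-- `U′_even`, the span of the basis monomials `x^r y^s z^t` (`r, s, t ∈ ℕ`)
with `r + s + t` even. -/
noncomputable def Uprimeeven (F : Type*) [Field F] (q : F) : Submodule F (Usl2 F q) :=
  Submodule.span F
    {m | ∃ r s t : ℕ, Even (r + s + t) ∧ m = ux F q ^ r * uy F q ^ s * uz F q ^ t}

end Paper

section QCommutation

variable {R K A : Type*} [CommRing R] [Field K] [Ring A] [Algebra R A] [Algebra K A]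

theorem pow_succ_mul_of_mul_eq {u v : A} {c : R} (h : u * v = c • (v * u) + (1 - c) • 1)
    (t : ℕ) :
    u ^ (t + 1) * v = c ^ (t + 1) • (v * u ^ (t + 1)) + (1 - c ^ (t + 1)) • u ^ t := by
  induction t with
  | zero => simpa using h
  | succ t ih =>
    rw [pow_succ' u (t + 1), mul_assoc, ih, mul_add, mul_smul_comm, mul_smul_comm, ← mul_assoc,
      h, ← pow_succ']
    simp only [add_mul, smul_mul_assoc, one_mul, mul_assoc, ← pow_succ']
    match_scalars <;> ring

-- At `t = 0` the truncated exponent `t - 1` is harmless: its coefficient `1 - c ^ 0` vanishes.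
theorem pow_mul_of_mul_eq {u v : A} {c : R} (h : u * v = c • (v * u) + (1 - c) • 1) (t : ℕ) :
    u ^ t * v = c ^ t • (v * u ^ t) + (1 - c ^ t) • u ^ (t - 1) := by
  cases t with
  | zero => simp
  | succ t => exact pow_succ_mul_of_mul_eq h t

theorem Units.zpow_mul_of_mul_eq {u : Aˣ} {v : A} {c : K} (hc : c ≠ 0)
    (h : ↑u * v = c • (v * ↑u) + (1 - c) • 1) (s : ℤ) :
    ↑(u ^ s) * v = c ^ s • (v * ↑(u ^ s)) + (1 - c ^ s) • (↑(u ^ (s - 1)) : A) := by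
  have hinv : ↑u⁻¹ * v = c⁻¹ • (v * ↑u⁻¹) + (1 - c⁻¹) • (↑u⁻¹ * ↑u⁻¹ : A) := by
    have h' := congrArg (fun w => (↑u⁻¹ : A) * w * ↑u⁻¹) h
    simp only [mul_add, add_mul, mul_smul_comm, smul_mul_assoc, mul_one, mul_assoc,
      Units.mul_inv, Units.inv_mul_cancel_left] at h'
    rw [h']
    match_scalars <;> grind
  induction s using Int.induction_on with
  | zero => simp
  | succ k ih =>
    rw [zpow_add_one, Units.val_mul, mul_assoc, h, mul_add, mul_smul_comm, mul_smul_comm,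
      ← mul_assoc, ih, add_sub_cancel_right]
    simp only [add_mul, smul_mul_assoc, mul_one, mul_assoc, ← Units.val_mul, ← zpow_add_one,
      sub_add_cancel]
    rw [zpow_add_one₀ hc]
    match_scalars <;> ring
  | pred k ih =>
    rw [zpow_sub_one, Units.val_mul, mul_assoc, hinv, mul_add, mul_smul_comm, mul_smul_comm,
      ← mul_assoc, ih, zpow_sub_one u (-k - 1), zpow_sub_one u (-k), zpow_sub_one₀ hc]
    simp only [Units.val_mul, add_mul, smul_mul_assoc, mul_assoc]
    match_scalars <;> ring

end QCommutation

def EquitableRel {K A : Type*} [Field K] [Ring A] [Algebra K A] (q : K) (a b : A) : Prop :=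
  q • (a * b) - q⁻¹ • (b * a) = (q - q⁻¹) • (1 : A)

namespace EquitableRel

variable {K A : Type*} [Field K] [Ring A] [Algebra K A] {q : K} {a b c : A}

theorem mul_swap (hq : q ≠ 0) (h : EquitableRel q a b) :
    b * a = q ^ 2 • (a * b) + (1 - q ^ 2) • 1 := by
  have hba : b * a = q • (q • (a * b) - (q - q⁻¹) • 1) := by
    rw [← h, sub_sub_cancel, smul_smul, mul_inv_cancel₀ hq, one_smul]
  rw [hba]
  match_scalars <;> grind

theorem mul_eq (hq : q ≠ 0) (h : EquitableRel q a b) :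
    a * b = (q ^ 2)⁻¹ • (b * a) + (1 - (q ^ 2)⁻¹) • 1 := by
  rw [h.mul_swap hq]
  match_scalars <;> grind

theorem sq_eq (hq : q ≠ 0) (hab : EquitableRel q a b) (hbc : EquitableRel q b c)
    (hca : EquitableRel q c a) :
    q • (1 - a * b) * q • (1 - c * a) - q ^ 2 • (q • (1 - c * a) * q • (1 - a * b)) =
      (q ^ 2 - 1) • (a * a - 1) := by
  have hba (w : A) : b * (a * w) = q ^ 2 • (a * (b * w)) + (1 - q ^ 2) • w := by
    rw [← mul_assoc, hab.mul_swap hq]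
    simp only [add_mul, smul_mul_assoc, one_mul, mul_assoc]
  have hca' (w : A) : c * (a * w) = (q ^ 2)⁻¹ • (a * (c * w)) + (1 - (q ^ 2)⁻¹) • w := by
    rw [← mul_assoc, hca.mul_eq hq]
    simp only [add_mul, smul_mul_assoc, one_mul, mul_assoc]
  -- normal-order every word with respect to `a < b < c` and compare coefficients
  simp only [mul_sub, sub_mul, smul_mul_assoc, mul_smul_comm, mul_assoc, one_mul, mul_one,
    smul_sub, smul_smul, hba, hbc.mul_swap hq, hca.mul_eq hq, hca', mul_add, add_mul, smul_add]
  match_scalars <;> grind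

theorem swap_mem (hq : q ≠ 0) (h : EquitableRel q a b) {S : Subalgebra K A} (hab : a * b ∈ S) :
    b * a ∈ S := by
  rw [h.mul_swap hq]
  exact add_mem (S.smul_mem hab _) (S.smul_mem (one_mem S) _)

theorem sq_mem (hq : q ≠ 0) (hq2 : q ^ 2 ≠ 1) (hab : EquitableRel q a b)
    (hbc : EquitableRel q b c) (hca : EquitableRel q c a) {S : Subalgebra K A}
    (hab_mem : a * b ∈ S) (hca_mem : c * a ∈ S) : a * a ∈ S := by
  have hνc : q • (1 - a * b) ∈ S := S.smul_mem (sub_mem (one_mem S) hab_mem) q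
  have hνb : q • (1 - c * a) ∈ S := S.smul_mem (sub_mem (one_mem S) hca_mem) q
  have hsq : a * a = 1 + (q ^ 2 - 1)⁻¹ •
      (q • (1 - a * b) * q • (1 - c * a) - q ^ 2 • (q • (1 - c * a) * q • (1 - a * b))) := by
    rw [sq_eq hq hab hbc hca, smul_smul, inv_mul_cancel₀ (sub_ne_zero.mpr hq2), one_smul,
      add_sub_cancel]
  rw [hsq]
  exact add_mem (one_mem S)
    (S.smul_mem (sub_mem (mul_mem hνc hνb) (S.smul_mem (mul_mem hνb hνc) _)) _)

end EquitableRel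

theorem List.prod_mem_of_even_length {M S : Type*} [Monoid M] [SetLike S M]
    [SubmonoidClass S M] {s : S} {G : Set M} (hG : ∀ g ∈ G, ∀ h ∈ G, g * h ∈ s) :
    ∀ l : List M, (∀ g ∈ l, g ∈ G) → Even l.length → l.prod ∈ s
  | [], _, _ => one_mem s
  | [_], _, hl => absurd hl (by simp)
  | g :: h :: l, hlG, hl => by
    rw [List.prod_cons, List.prod_cons, ← mul_assoc]
    refine mul_mem (hG g (hlG g (by simp)) h (hlG h (by simp)))
      (List.prod_mem_of_even_length hG l (fun g hg => hlG g (by simp [hg])) ?_)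
    simpa [parity_simps] using hl

theorem Algebra.adjoin_le_of_one_mem_of_mul_mem {R A : Type*} [CommSemiring R] [Semiring A]
    [Algebra R A] {s : Set A} {V : Submodule R A} (h1 : 1 ∈ V)
    (hmul : ∀ v ∈ V, ∀ g ∈ s, v * g ∈ V) : Subalgebra.toSubmodule (Algebra.adjoin R s) ≤ V := by
  rw [Algebra.adjoin_eq_span, Submodule.span_le]
  intro m hm
  induction hm using Submonoid.closure_induction_right with
  | one => exact h1
  | mul_right v _ g hg hv => exact hmul v hv g hg

theorem Submodule.smul_mem_of_ne_zero {R M : Type*} [Semiring R] [AddCommMonoid M] [Module R M]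
    {V : Submodule R M} {a : R} {m : M} (h : a ≠ 0 → m ∈ V) : a • m ∈ V := by
  rcases eq_or_ne a 0 with rfl | ha
  · simp
  · exact V.smul_mem a (h ha)

namespace Paper

section

variable {F : Type*} [Field F] {q : F}

theorem equitableRel_ux_uy : EquitableRel q (ux F q) (uy F q) := by
  simpa [EquitableRel, ux, uy] using RingQuot.mkAlgHom_rel F (EqRel.xy (F := F) (q := q))

theorem equitableRel_uy_uz : EquitableRel q (uy F q) (uz F q) := by
  simpa [EquitableRel, uy, uz] using RingQuot.mkAlgHom_rel F (EqRel.yz (F := F) (q := q))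

theorem equitableRel_uz_ux : EquitableRel q (uz F q) (ux F q) := by
  simpa [EquitableRel, uz, ux] using RingQuot.mkAlgHom_rel F (EqRel.zx (F := F) (q := q))

noncomputable def yUnit (F : Type*) [Field F] (q : F) : (Usl2 F q)ˣ where
  val := uy F q
  inv := uy' F q
  val_inv := by simpa [uy, uy'] using RingQuot.mkAlgHom_rel F (EqRel.yy' (F := F) (q := q))
  inv_val := by simpa [uy, uy'] using RingQuot.mkAlgHom_rel F (EqRel.y'y (F := F) (q := q))

theorem uy_mul_uy' : uy F q * uy' F q = 1 :=
  (yUnit F q).mul_inv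

theorem uy'_mul_uy : uy' F q * uy F q = 1 :=
  (yUnit F q).inv_mul

theorem uypow_eq_val_zpow (s : ℤ) : uypow F q s = ↑(yUnit F q ^ s) := by
  rcases Int.eq_nat_or_neg s with ⟨n, rfl | rfl⟩
  · simp [uypow, yUnit]
  · cases n with
    | zero => simp [uypow]
    | succ n =>
      rw [uypow, if_neg (by omega), neg_neg, Int.toNat_natCast, zpow_neg, zpow_natCast,
        ← inv_pow, Units.val_pow_eq_pow_val]
      rfl

theorem uypow_mul_uy (s : ℤ) : uypow F q s * uy F q = uypow F q (s + 1) := by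
  rw [uypow_eq_val_zpow, uypow_eq_val_zpow, zpow_add_one, Units.val_mul]
  rfl

theorem uypow_mul_uy' (s : ℤ) : uypow F q s * uy' F q = uypow F q (s - 1) := by
  rw [uypow_eq_val_zpow, uypow_eq_val_zpow, zpow_sub_one, Units.val_mul]
  rfl

theorem uz_pow_mul_ux (hq0 : q ≠ 0) (t : ℕ) :
    uz F q ^ t * ux F q =
      (q ^ 2)⁻¹ ^ t • (ux F q * uz F q ^ t) + (1 - (q ^ 2)⁻¹ ^ t) • uz F q ^ (t - 1) :=
  pow_mul_of_mul_eq (equitableRel_uz_ux.mul_eq hq0) t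

theorem uz_pow_mul_uy (hq0 : q ≠ 0) (t : ℕ) :
    uz F q ^ t * uy F q =
      (q ^ 2) ^ t • (uy F q * uz F q ^ t) + (1 - (q ^ 2) ^ t) • uz F q ^ (t - 1) :=
  pow_mul_of_mul_eq (equitableRel_uy_uz.mul_swap hq0) t

theorem uypow_mul_ux (hq0 : q ≠ 0) (s : ℤ) :
    uypow F q s * ux F q =
      (q ^ 2) ^ s • (ux F q * uypow F q s) + (1 - (q ^ 2) ^ s) • uypow F q (s - 1) := by
  simpa only [uypow_eq_val_zpow] using
    Units.zpow_mul_of_mul_eq (pow_ne_zero 2 hq0) (equitableRel_ux_uy.mul_swap hq0) s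

noncomputable def monomial (F : Type*) [Field F] (q : F) (r : ℕ) (s : ℤ) (t : ℕ) : Usl2 F q :=
  ux F q ^ r * uypow F q s * uz F q ^ t

theorem monomial_mul_uz (r : ℕ) (s : ℤ) (t : ℕ) :
    monomial F q r s t * uz F q = monomial F q r s (t + 1) := by
  rw [monomial, monomial, mul_assoc, ← pow_succ]

theorem monomial_mul_uy (hq0 : q ≠ 0) (r : ℕ) (s : ℤ) (t : ℕ) :
    monomial F q r s t * uy F q =
      (q ^ 2) ^ t • monomial F q r (s + 1) t + (1 - (q ^ 2) ^ t) • monomial F q r s (t - 1) := by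
  simp only [monomial, mul_assoc, uz_pow_mul_uy hq0, mul_add, mul_smul_comm, ← uypow_mul_uy]

theorem monomial_mul_ux (hq0 : q ≠ 0) (r : ℕ) (s : ℤ) (t : ℕ) :
    monomial F q r s t * ux F q =
      ((q ^ 2)⁻¹ ^ t * (q ^ 2) ^ s) • monomial F q (r + 1) s t +
        ((q ^ 2)⁻¹ ^ t * (1 - (q ^ 2) ^ s)) • monomial F q r (s - 1) t +
        (1 - (q ^ 2)⁻¹ ^ t) • monomial F q r s (t - 1) := by
  simp only [monomial, mul_assoc, uz_pow_mul_ux hq0, mul_add, mul_smul_comm]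
  rw [← mul_assoc (uypow F q s), uypow_mul_ux hq0, pow_succ (ux F q) r]
  simp only [add_mul, mul_add, smul_mul_assoc, mul_smul_comm, mul_assoc]
  module

/-- The exponent of `y` ranges over `Y`: all of `ℤ` for `U_even`, `ℕ` for `U′_even`. -/
noncomputable def monomialSpan (F : Type*) [Field F] (q : F) (Y : Set ℤ) (n : ℤ) :
    Submodule F (Usl2 F q) :=
  Submodule.span F
    {m | ∃ (r t : ℕ) (s : ℤ), s ∈ Y ∧ (r + s + t) % 2 = n % 2 ∧ m = monomial F q r s t}

section MonomialSpan

variable {Y : Set ℤ} {n : ℤ} {u : Usl2 F q}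

theorem monomial_mem_monomialSpan {r t : ℕ} {s : ℤ} (hs : s ∈ Y)
    (hn : (r + s + t) % 2 = n % 2) : monomial F q r s t ∈ monomialSpan F q Y n :=
  Submodule.subset_span ⟨r, t, s, hs, hn, rfl⟩

theorem monomialSpan_add_two (n : ℤ) :
    monomialSpan F q Y (n + 1 + 1) = monomialSpan F q Y n := by
  rw [monomialSpan, monomialSpan, show (n + 1 + 1) % 2 = n % 2 by omega]

theorem one_mem_monomialSpan (hY : 0 ∈ Y) : (1 : Usl2 F q) ∈ monomialSpan F q Y 0 := by
  simpa [monomial, uypow] using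
    monomial_mem_monomialSpan (F := F) (q := q) (r := 0) (t := 0) hY rfl

theorem mul_mem_of_monomial_mul_mem {W : Submodule F (Usl2 F q)} {g : Usl2 F q}
    (h : ∀ (r t : ℕ) (s : ℤ), s ∈ Y → (r + s + t) % 2 = n % 2 → monomial F q r s t * g ∈ W)
    (hu : u ∈ monomialSpan F q Y n) : u * g ∈ W :=
  (Submodule.span_le (p := W.comap (LinearMap.mulRight F g))).mpr
    (by rintro _ ⟨r, t, s, hs, hn, rfl⟩; exact h r t s hs hn) hu

theorem mul_uz_mem (hu : u ∈ monomialSpan F q Y n) :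
    u * uz F q ∈ monomialSpan F q Y (n + 1) :=
  mul_mem_of_monomial_mul_mem (fun r t s hs hn => by
    rw [monomial_mul_uz]
    exact monomial_mem_monomialSpan hs (by omega)) hu

theorem mul_uy_mem (hq0 : q ≠ 0) (hY : ∀ s ∈ Y, s + 1 ∈ Y) (hu : u ∈ monomialSpan F q Y n) :
    u * uy F q ∈ monomialSpan F q Y (n + 1) := by
  refine mul_mem_of_monomial_mul_mem (fun r t s hs hn => ?_) hu
  rw [monomial_mul_uy hq0]
  refine add_mem (Submodule.smul_mem _ _ (monomial_mem_monomialSpan (hY s hs) (by omega)))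
    (Submodule.smul_mem_of_ne_zero fun ht => monomial_mem_monomialSpan hs ?_)
  have : t ≠ 0 := by rintro rfl; simp at ht
  omega

theorem mul_ux_mem (hq0 : q ≠ 0) (hY : ∀ s ∈ Y, s ≠ 0 → s - 1 ∈ Y)
    (hu : u ∈ monomialSpan F q Y n) : u * ux F q ∈ monomialSpan F q Y (n + 1) := by
  refine mul_mem_of_monomial_mul_mem (fun r t s hs hn => ?_) hu
  rw [monomial_mul_ux hq0]
  refine add_mem (add_mem ?_ ?_) ?_
  · exact Submodule.smul_mem _ _ (monomial_mem_monomialSpan hs (by omega))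
  · refine Submodule.smul_mem_of_ne_zero fun hs0 =>
      monomial_mem_monomialSpan (hY s hs ?_) (by omega)
    rintro rfl
    simp at hs0
  · refine Submodule.smul_mem_of_ne_zero fun ht => monomial_mem_monomialSpan hs ?_
    have : t ≠ 0 := by rintro rfl; simp at ht
    omega

-- Solve `monomial_mul_uy` for the monomial times `y⁻¹`; the error term has a smaller `z`-degree.
theorem monomial_mul_uy'_mem (hq0 : q ≠ 0) :
    ∀ (t r : ℕ) (s n : ℤ), (r + s + t) % 2 = n % 2 →
      monomial F q r s t * uy' F q ∈ monomialSpan F q Set.univ (n + 1)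
  | 0, r, s, n, hn => by
    have h : monomial F q r s 0 * uy' F q = monomial F q r (s - 1) 0 := by
      simp only [monomial, pow_zero, mul_one, mul_assoc, uypow_mul_uy']
    rw [h]
    exact monomial_mem_monomialSpan trivial (by omega)
  | t + 1, r, s, n, hn => by
    set c : F := (q ^ 2) ^ (t + 1)
    have hc : c ≠ 0 := pow_ne_zero _ (pow_ne_zero _ hq0)
    have key := congrArg (· * uy' F q) (monomial_mul_uy hq0 r (s - 1) (t + 1))
    simp only [mul_assoc, uy_mul_uy', mul_one, add_mul, smul_mul_assoc, sub_add_cancel,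
      Nat.add_sub_cancel] at key
    have h : monomial F q r s (t + 1) * uy' F q = c⁻¹ •
        (monomial F q r (s - 1) (t + 1) - (1 - c) • (monomial F q r (s - 1) t * uy' F q)) := by
      rw [key, add_sub_cancel_right, smul_smul, inv_mul_cancel₀ hc, one_smul]
    rw [h]
    exact Submodule.smul_mem _ _ (sub_mem (monomial_mem_monomialSpan trivial (by omega))
      (Submodule.smul_mem _ _ (monomial_mul_uy'_mem hq0 t r (s - 1) n (by omega))))

theorem mul_uy'_mem (hq0 : q ≠ 0) (hu : u ∈ monomialSpan F q Set.univ n) :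
    u * uy' F q ∈ monomialSpan F q Set.univ (n + 1) :=
  mul_mem_of_monomial_mul_mem (fun r t s _ hn => monomial_mul_uy'_mem hq0 t r s n hn) hu

theorem mul_nux_mem (hq0 : q ≠ 0) (hY : ∀ s ∈ Y, s + 1 ∈ Y) (hu : u ∈ monomialSpan F q Y n) :
    u * nux F q ∈ monomialSpan F q Y n := by
  have h := mul_uz_mem (mul_uy_mem hq0 hY hu)
  rw [monomialSpan_add_two] at h
  rw [nux, mul_smul_comm, mul_sub, mul_one, ← mul_assoc]
  exact Submodule.smul_mem _ _ (sub_mem hu h)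

theorem mul_nuy_mem (hq0 : q ≠ 0) (hY : ∀ s ∈ Y, s ≠ 0 → s - 1 ∈ Y)
    (hu : u ∈ monomialSpan F q Y n) : u * nuy F q ∈ monomialSpan F q Y n := by
  have h := mul_ux_mem hq0 hY (mul_uz_mem hu)
  rw [monomialSpan_add_two] at h
  rw [nuy, mul_smul_comm, mul_sub, mul_one, ← mul_assoc]
  exact Submodule.smul_mem _ _ (sub_mem hu h)

theorem mul_nuz_mem (hq0 : q ≠ 0) (hY₁ : ∀ s ∈ Y, s + 1 ∈ Y)
    (hY₂ : ∀ s ∈ Y, s ≠ 0 → s - 1 ∈ Y) (hu : u ∈ monomialSpan F q Y n) :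
    u * nuz F q ∈ monomialSpan F q Y n := by
  have h := mul_uy_mem hq0 hY₁ (mul_ux_mem hq0 hY₂ hu)
  rw [monomialSpan_add_two] at h
  rw [nuz, mul_smul_comm, mul_sub, mul_one, ← mul_assoc]
  exact Submodule.smul_mem _ _ (sub_mem hu h)

theorem mul_uy'_sq_mem (hq0 : q ≠ 0) (hu : u ∈ monomialSpan F q Set.univ n) :
    u * uy' F q ^ 2 ∈ monomialSpan F q Set.univ n := by
  rw [sq, ← mul_assoc, ← monomialSpan_add_two]
  exact mul_uy'_mem hq0 (mul_uy'_mem hq0 hu)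

theorem monomial_eq_prod (r : ℕ) (s : ℤ) (t : ℕ) :
    monomial F q r s t = (List.replicate r (ux F q) ++
      List.replicate s.natAbs (if 0 ≤ s then uy F q else uy' F q) ++
      List.replicate t (uz F q)).prod := by
  rw [monomial, List.prod_append, List.prod_append, List.prod_replicate, List.prod_replicate,
    List.prod_replicate, uypow]
  split_ifs with hs
  · rw [show s.toNat = s.natAbs by omega]
  · rw [show (-s).toNat = s.natAbs by omega]

theorem monomialSpan_zero_le {S : Subalgebra F (Usl2 F q)} {G : Set (Usl2 F q)}
    (hG : ∀ g ∈ G, ∀ h ∈ G, g * h ∈ S) (hx : ux F q ∈ G) (hz : uz F q ∈ G)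
    (hY : ∀ s ∈ Y, (if 0 ≤ s then uy F q else uy' F q) ∈ G) :
    monomialSpan F q Y 0 ≤ Subalgebra.toSubmodule S := by
  rw [monomialSpan, Submodule.span_le]
  rintro _ ⟨r, t, s, hs, hn, rfl⟩
  rw [monomial_eq_prod]
  refine List.prod_mem_of_even_length hG _ ?_ ?_
  · intro g hg
    simp only [List.mem_append, List.mem_replicate] at hg
    rcases hg with ((⟨-, rfl⟩ | ⟨-, rfl⟩) | ⟨-, rfl⟩)
    exacts [hx, hY s hs, hz]
  · simp only [List.length_append, List.length_replicate, Nat.even_iff]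
    omega

end MonomialSpan

theorem mul_mem_adjoin_nu (hq0 : q ≠ 0) (hq2 : q ^ 2 ≠ 1) :
    ∀ g ∈ ({ux F q, uy F q, uz F q} : Set (Usl2 F q)),
      ∀ h ∈ ({ux F q, uy F q, uz F q} : Set (Usl2 F q)),
        g * h ∈ Algebra.adjoin F {nux F q, nuy F q, nuz F q} := by
  set S := Algebra.adjoin F {nux F q, nuy F q, nuz F q}
  have mem_of_nu {w : Usl2 F q} (h : q • (1 - w) ∈ S) : w ∈ S := by
    have h' := S.smul_mem h q⁻¹
    rw [smul_smul, inv_mul_cancel₀ hq0, one_smul] at h'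
    simpa using sub_mem (one_mem S) h'
  have hxy : ux F q * uy F q ∈ S := mem_of_nu (Algebra.subset_adjoin (by simp [nuz]))
  have hyz : uy F q * uz F q ∈ S := mem_of_nu (Algebra.subset_adjoin (by simp [nux]))
  have hzx : uz F q * ux F q ∈ S := mem_of_nu (Algebra.subset_adjoin (by simp [nuy]))
  have hyx := equitableRel_ux_uy.swap_mem hq0 hxy
  have hzy := equitableRel_uy_uz.swap_mem hq0 hyz
  have hxz := equitableRel_uz_ux.swap_mem hq0 hzx
  have hxx := equitableRel_ux_uy.sq_mem hq0 hq2 equitableRel_uy_uz equitableRel_uz_ux hxy hzx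
  have hyy := equitableRel_uy_uz.sq_mem hq0 hq2 equitableRel_uz_ux equitableRel_ux_uy hyz hxy
  have hzz := equitableRel_uz_ux.sq_mem hq0 hq2 equitableRel_ux_uy equitableRel_uy_uz hzx hyz
  rintro g (rfl | rfl | rfl) h (rfl | rfl | rfl) <;> assumption

theorem mul_mem_adjoin_nu_uy'_sq (hq0 : q ≠ 0) (hq2 : q ^ 2 ≠ 1) :
    ∀ g ∈ ({uy' F q, ux F q, uy F q, uz F q} : Set (Usl2 F q)),
      ∀ h ∈ ({uy' F q, ux F q, uy F q, uz F q} : Set (Usl2 F q)),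
        g * h ∈ Algebra.adjoin F {nux F q, nuy F q, nuz F q, uy' F q ^ 2} := by
  set S := Algebra.adjoin F {nux F q, nuy F q, nuz F q, uy' F q ^ 2}
  have hle : Algebra.adjoin F {nux F q, nuy F q, nuz F q} ≤ S :=
    Algebra.adjoin_mono (by intro w; simp only [Set.mem_insert_iff]; tauto)
  have hsq : uy' F q ^ 2 ∈ S := Algebra.subset_adjoin (by simp)
  have hpair := mul_mem_adjoin_nu hq0 hq2
  rintro g (rfl | hg) h (rfl | hh)
  · rw [← sq]
    exact hsq
  · have h_eq : uy' F q * h = uy' F q ^ 2 * (uy F q * h) := by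
      rw [sq, mul_assoc, ← mul_assoc (uy' F q) (uy F q), uy'_mul_uy, one_mul]
    rw [h_eq]
    exact mul_mem hsq (hle (hpair _ (by simp) h hh))
  · have h_eq : g * uy' F q = g * uy F q * uy' F q ^ 2 := by
      rw [sq, mul_assoc, ← mul_assoc (uy F q), uy_mul_uy', one_mul]
    rw [h_eq]
    exact mul_mem (hle (hpair g hg _ (by simp))) hsq
  · exact hle (hpair g hg h hh)

theorem Ueven_eq_monomialSpan : Ueven F q = monomialSpan F q Set.univ 0 := by
  rw [Ueven, monomialSpan]
  congr! 8 with r t s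
  simp [Int.even_iff, monomial]

theorem Uprimeeven_eq_monomialSpan : Uprimeeven F q = monomialSpan F q (Set.Ici 0) 0 := by
  rw [Uprimeeven, monomialSpan]
  congr 1
  ext m
  constructor
  · rintro ⟨r, s, t, hn, rfl⟩
    refine ⟨r, t, s, Int.natCast_nonneg s, ?_, by simp [monomial, uypow]⟩
    rw [Nat.even_iff] at hn
    omega
  · rintro ⟨r, t, s, hs, hn, rfl⟩
    lift s to ℕ using hs
    refine ⟨r, s, t, ?_, by simp [monomial, uypow]⟩
    rw [Nat.even_iff]
    omega

theorem adjoin_nu_uy'_sq_eq_monomialSpan (hq0 : q ≠ 0) (hq2 : q ^ 2 ≠ 1) :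
    Subalgebra.toSubmodule (Algebra.adjoin F {nux F q, nuy F q, nuz F q, uy' F q ^ 2}) =
      monomialSpan F q Set.univ 0 := by
  refine le_antisymm
    (Algebra.adjoin_le_of_one_mem_of_mul_mem (one_mem_monomialSpan trivial) ?_)
    (monomialSpan_zero_le (mul_mem_adjoin_nu_uy'_sq hq0 hq2) (by simp) (by simp)
      (fun s _ => by split_ifs <;> simp))
  rintro u hu g (rfl | rfl | rfl | rfl)
  exacts [mul_nux_mem hq0 (fun _ _ => trivial) hu, mul_nuy_mem hq0 (fun _ _ _ => trivial) hu,
    mul_nuz_mem hq0 (fun _ _ => trivial) (fun _ _ _ => trivial) hu, mul_uy'_sq_mem hq0 hu]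

theorem adjoin_nu_eq_monomialSpan (hq0 : q ≠ 0) (hq2 : q ^ 2 ≠ 1) :
    Subalgebra.toSubmodule (Algebra.adjoin F {nux F q, nuy F q, nuz F q}) =
      monomialSpan F q (Set.Ici 0) 0 := by
  have hsucc (s : ℤ) (hs : 0 ≤ s) : 0 ≤ s + 1 := by omega
  have hpred (s : ℤ) (hs : 0 ≤ s) (hs0 : s ≠ 0) : 0 ≤ s - 1 := by omega
  refine le_antisymm
    (Algebra.adjoin_le_of_one_mem_of_mul_mem (one_mem_monomialSpan Set.self_mem_Ici) ?_)
    (monomialSpan_zero_le (mul_mem_adjoin_nu hq0 hq2) (by simp) (by simp)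
      (fun s hs => by rw [if_pos (Set.mem_Ici.mp hs)]; simp))
  rintro u hu g (rfl | rfl | rfl)
  exacts [mul_nux_mem hq0 hsucc hu, mul_nuy_mem hq0 hpred hu, mul_nuz_mem hq0 hsucc hpred hu]

end

/-- **Proposition 5.5.** (i) `U_even` is generated as an `𝔽`-algebra by
`ν_x, ν_y, ν_z, y⁻²`.  (ii) `U′_even` is generated as an `𝔽`-algebra by
`ν_x, ν_y, ν_z`. -/
theorem statement10 (F : Type*) [Field F] (q : F) (hq0 : q ≠ 0) (hq4 : q ^ 4 ≠ 1) :
    Subalgebra.toSubmodule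
        (Algebra.adjoin F {nux F q, nuy F q, nuz F q, uy' F q ^ 2}) = Ueven F q ∧
    Subalgebra.toSubmodule
        (Algebra.adjoin F {nux F q, nuy F q, nuz F q}) = Uprimeeven F q := by
  have hq2 : q ^ 2 ≠ 1 := fun h => hq4 (by rw [show 4 = 2 * 2 from rfl, pow_mul, h, one_pow])
  rw [Ueven_eq_monomialSpan, Uprimeeven_eq_monomialSpan]
  exact ⟨adjoin_nu_uy'_sq_eq_monomialSpan hq0 hq2, adjoin_nu_eq_monomialSpan hq0 hq2⟩

end Paper
end

section
/- In U_q(𝔰𝔩₂) the Casimir element satisfies Λ · (q − q⁻¹)(q² − q⁻²) = A²y − (q² + q⁻²)AyA + yA² + (q² − q⁻²)² y + (a + a⁻¹)(q − q⁻¹)² A. -/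
/-!
The three q-commutation relations, solved for `xy`, `zy` and `zx`, rewrite every word in
`x, y, z` into a combination of ordered monomials `yⁱxʲzᵏ`. After expanding `A = a⁻¹x + az`,
both sides reduce to such combinations, whose coefficients agree as Laurent polynomials in
`q` and `a`.
-/

namespace Paper


/-- The Casimir element `Λ = qx + q⁻¹y + qz − qxyz`. -/
noncomputable def casimir (F : Type*) [Field F] (q : F) : Usl2 F q :=
  q • ux F q + q⁻¹ • uy F q + q • uz F q - q • (ux F q * uy F q * uz F q)

section EquitableRelations

variable {F R : Type*} [Field F] [Ring R] [Algebra F R] {q : F}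

theorem mul_eq_of_qCommutator (hq : q ≠ 0) {u v : R}
    (h : q • (u * v) - q⁻¹ • (v * u) = (q - q⁻¹) • (1 : R)) :
    u * v = (q⁻¹ * q⁻¹) • (v * u) + (q⁻¹ * (q - q⁻¹)) • (1 : R) := by
  calc u * v = q⁻¹ • (q • (u * v)) := by rw [smul_smul, inv_mul_cancel₀ hq, one_smul]
    _ = _ := by rw [eq_add_of_sub_eq' h, smul_add, smul_smul, smul_smul, add_comm]

theorem mul_eq_of_qCommutator' (hq : q ≠ 0) {u v : R}
    (h : q • (u * v) - q⁻¹ • (v * u) = (q - q⁻¹) • (1 : R)) :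
    v * u = (q * q) • (u * v) + (q * (q⁻¹ - q)) • (1 : R) := by
  have h' : q⁻¹ • (v * u) = q • (u * v) + (q⁻¹ - q) • (1 : R) := by
    rw [← neg_sub q, neg_smul, ← h]; abel
  calc v * u = q • (q⁻¹ • (v * u)) := by rw [smul_smul, mul_inv_cancel₀ hq, one_smul]
    _ = _ := by rw [h', smul_add, smul_smul, smul_smul]

theorem mul_mul_eq_of_mul_eq {u v : R} {c d : F} (h : u * v = c • (v * u) + d • (1 : R))
    (w : R) : u * (v * w) = c • (v * (u * w)) + d • w := by
  rw [← mul_assoc, h, add_mul, smul_mul_assoc, smul_mul_assoc, one_mul, mul_assoc]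

variable {a : F} {x y z : R}

theorem smul_casimir_eq_of_equitable (hq : q ≠ 0) (ha : a ≠ 0)
    (hxy : q • (x * y) - q⁻¹ • (y * x) = (q - q⁻¹) • (1 : R))
    (hyz : q • (y * z) - q⁻¹ • (z * y) = (q - q⁻¹) • (1 : R))
    (hzx : q • (z * x) - q⁻¹ • (x * z) = (q - q⁻¹) • (1 : R)) :
    ((q - q⁻¹) * (q ^ 2 - (q ^ 2)⁻¹)) • (q • x + q⁻¹ • y + q • z - q • (x * y * z))
      = (a⁻¹ • x + a • z) ^ 2 * y
        - (q ^ 2 + (q ^ 2)⁻¹) • ((a⁻¹ • x + a • z) * y * (a⁻¹ • x + a • z))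
        + y * (a⁻¹ • x + a • z) ^ 2
        + ((q ^ 2 - (q ^ 2)⁻¹) ^ 2) • y
        + ((a + a⁻¹) * (q - q⁻¹) ^ 2) • (a⁻¹ • x + a • z) := by
  have hxy' := mul_eq_of_qCommutator hq hxy
  have hzy' := mul_eq_of_qCommutator' hq hyz
  have hzx' := mul_eq_of_qCommutator hq hzx
  simp only [pow_two, mul_add, add_mul, smul_add, smul_sub, sub_mul, mul_sub, smul_mul_assoc,
    mul_smul_comm, smul_smul, mul_assoc, mul_one, one_mul, hxy', hzy', hzx',
    mul_mul_eq_of_mul_eq hxy', mul_mul_eq_of_mul_eq hzy']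
  match_scalars <;> field_simp <;> ring

end EquitableRelations

section Usl2

variable (F : Type*) [Field F] (q : F)

theorem qCommutator_ux_uy :
    q • (ux F q * uy F q) - q⁻¹ • (uy F q * ux F q) = (q - q⁻¹) • (1 : Usl2 F q) := by
  simpa [ux, uy] using RingQuot.mkAlgHom_rel F (EqRel.xy (F := F) (q := q))

theorem qCommutator_uy_uz :
    q • (uy F q * uz F q) - q⁻¹ • (uz F q * uy F q) = (q - q⁻¹) • (1 : Usl2 F q) := by
  simpa [uy, uz] using RingQuot.mkAlgHom_rel F (EqRel.yz (F := F) (q := q))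

theorem qCommutator_uz_ux :
    q • (uz F q * ux F q) - q⁻¹ • (ux F q * uz F q) = (q - q⁻¹) • (1 : Usl2 F q) := by
  simpa [uz, ux] using RingQuot.mkAlgHom_rel F (EqRel.zx (F := F) (q := q))

end Usl2

theorem statement15_general (F : Type*) [Field F] (q : F) (hq0 : q ≠ 0)
    (a : F) (ha0 : a ≠ 0) :
    ((q - q⁻¹) * (q ^ 2 - (q ^ 2)⁻¹)) • casimir F q
      = uA F q a ^ 2 * uy F q
        - (q ^ 2 + (q ^ 2)⁻¹) • (uA F q a * uy F q * uA F q a)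
        + uy F q * uA F q a ^ 2
        + ((q ^ 2 - (q ^ 2)⁻¹) ^ 2) • uy F q
        + ((a + a⁻¹) * (q - q⁻¹) ^ 2) • uA F q a :=
  smul_casimir_eq_of_equitable hq0 ha0 (qCommutator_ux_uy F q) (qCommutator_uy_uz F q)
    (qCommutator_uz_ux F q)

/-- **Lemma 7.12.** In `U_q(sl2)` the Casimir element satisfies
`Λ (q − q⁻¹)(q² − q⁻²) = A²y − (q² + q⁻²)AyA + yA² + (q² − q⁻²)² y
  + (a + a⁻¹)(q − q⁻¹)² A`. -/
theorem statement15 (F : Type*) [Field F] (q : F) (hq0 : q ≠ 0) (hq4 : q ^ 4 ≠ 1)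
    (a : F) (ha0 : a ≠ 0) (ha2 : a ^ 2 ≠ 1) :
    ((q - q⁻¹) * (q ^ 2 - (q ^ 2)⁻¹)) • casimir F q
      = uA F q a ^ 2 * uy F q
        - (q ^ 2 + (q ^ 2)⁻¹) • (uA F q a * uy F q * uA F q a)
        + uy F q * uA F q a ^ 2
        + ((q ^ 2 - (q ^ 2)⁻¹) ^ 2) • uy F q
        + ((a + a⁻¹) * (q - q⁻¹) ^ 2) • uA F q a :=
  statement15_general F q hq0 a ha0

end Paper
end
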